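/- For α ∈ ℝ with (5 − 3√3)/2 ≤ α ≤ 1 and the optimal damping parameter ω* = 1/(1+α²) if α ≥ 0 and ω* = 1 if α < 0, we have sup over θ ∈ [π/2, π] of Ŝ(ω*, α, θ) ≤ 1/√2. -/

import Mathlib

open Real Set

/-!
For `θ ∈ [π/2, π]` we have `cos θ ≤ 0`. If `α ≥ 0`, the optimal `ω = 1/(1+α²)` lies in `[0, 1]`,
so the cross term `2ω(1-ω)α cos θ` is nonpositive, and since `1 - ω = α²ω` the remaining terms
add up to `α²/(1+α²) ≤ 1/2`. If `α < 0`, then `ω = 1` and the radicand is `α²`, which is at most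
`1/4` because `(5 - 3√3)/2 > -1/2`.
-/

lemma neg_half_lt_five_sub_three_mul_sqrt_three_div_two : -1 / 2 < (5 - 3 * √3) / 2 := by
  have : √3 < 2 := by rw [sqrt_lt' two_pos]; norm_num
  linarith

lemma damping_cross_term_nonpos {ω α c : ℝ} (hω₀ : 0 ≤ ω) (hω₁ : ω ≤ 1) (hα : 0 ≤ α)
    (hc : c ≤ 0) : 2 * ω * (1 - ω) * α * c ≤ 0 :=
  mul_nonpos_of_nonneg_of_nonpos (by have := sub_nonneg.2 hω₁; positivity) hc

lemma one_sub_sq_add_sq_mul_sq_of_inv_one_add_sq (α : ℝ) :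
    (1 - 1 / (1 + α ^ 2)) ^ 2 + α ^ 2 * (1 / (1 + α ^ 2)) ^ 2 = α ^ 2 / (1 + α ^ 2) := by
  field_simp
  ring

lemma sq_div_one_add_sq_le_half {α : ℝ} (h : α ^ 2 ≤ 1) : α ^ 2 / (1 + α ^ 2) ≤ 1 / 2 := by
  rw [div_le_iff₀ (by positivity)]
  linarith

lemma one_div_one_add_sq_le_one (α : ℝ) : 1 / (1 + α ^ 2) ≤ 1 :=
  div_le_one_of_le₀ (by nlinarith [sq_nonneg α]) (by positivity)

/-- For `(5 - 3√3)/2 ≤ α ≤ 1` and the optimal damping parameter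
`ω* = 1/(1+α²)` if `α ≥ 0`, `ω* = 1` if `α < 0`, the supremum over
`θ ∈ [π/2, π]` of `Ŝ(ω*, α, θ)` is at most `1/√2`. -/
theorem smoothing_factor_le_inv_sqrt_two (α : ℝ)
    (h1 : (5 - 3 * Real.sqrt 3) / 2 ≤ α) (h2 : α ≤ 1) :
    let S : ℝ → ℝ → ℝ := fun ω θ =>
      Real.sqrt ((1 - ω) ^ 2 + 2 * ω * (1 - ω) * α * Real.cos θ + α ^ 2 * ω ^ 2)
    let ωstar : ℝ := if 0 ≤ α then 1 / (1 + α ^ 2) else 1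
    ∀ θ ∈ Set.Icc (π / 2) π, S ωstar θ ≤ 1 / Real.sqrt 2 := by
  intro S ωstar θ hθ
  have hcos : cos θ ≤ 0 := cos_nonpos_of_pi_div_two_le_of_le hθ.1 (by linarith [hθ.2, pi_pos])
  suffices (1 - ωstar) ^ 2 + 2 * ωstar * (1 - ωstar) * α * cos θ + α ^ 2 * ωstar ^ 2 ≤ 1 / 2 by
    simpa [S, ← sqrt_inv] using sqrt_le_sqrt this
  rcases le_or_gt 0 α with hα | hα
  · simp only [ωstar, if_pos hα]
    have hcross := damping_cross_term_nonpos (by positivity) (one_div_one_add_sq_le_one α) hα hcos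
    calc _ ≤ (1 - 1 / (1 + α ^ 2)) ^ 2 + α ^ 2 * (1 / (1 + α ^ 2)) ^ 2 := by linarith
      _ = α ^ 2 / (1 + α ^ 2) := one_sub_sq_add_sq_mul_sq_of_inv_one_add_sq α
      _ ≤ 1 / 2 := sq_div_one_add_sq_le_half (by nlinarith)
  · simp only [ωstar, if_neg hα.not_ge]
    nlinarith [neg_half_lt_five_sub_three_mul_sqrt_three_div_two]
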